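/- Suppose aᵢ = a for all i ∈ {1,…,n}, where a ≥ 2. Then the minimum of #Ap(Γₙ, x) over x ∈ {1, …, aⁿ} equals min{ a^k + λ₁ + λ₂ + ⋯ + λ_{n−k} : k ∈ {0, 1, …, n} }, i.e., min{1 + Σ_{i=1}^{n}λᵢ, a + Σ_{i=1}^{n−1}λᵢ, …, a^{n−1} + λ₁, aⁿ}. (This minimum is the second Feng–Rao number E(Γₙ, 2).) -/

import Mathlib

/-- A numerical semigroup: an additive submonoid of ℕ with finite complement. -/
def IsNumericalSemigroup (Γ : Set ℕ) : Prop :=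
  0 ∈ Γ ∧ (∀ x ∈ Γ, ∀ y ∈ Γ, x + y ∈ Γ) ∧ Γᶜ.Finite

/-- The Apéry set Ap(Γ,x) = {s ∈ Γ : s - x ∉ Γ}. -/
def Ap (Γ : Set ℕ) (x : ℕ) : Set ℕ := {s ∈ Γ | ∀ t ∈ Γ, s ≠ t + x}

/-- The inductive numerical semigroups Γ₀ = ℕ, Γᵢ = aᵢ·Γ_{i-1} ∪ (aᵢbᵢ + ℕ). -/
def IndSG (a b : ℕ → ℕ) : ℕ → Set ℕ
  | 0 => Set.univ
  | i + 1 => (fun x => a (i + 1) * x) '' IndSG a b i ∪ {x | a (i + 1) * b (i + 1) ≤ x}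

/-!
With all `aᵢ = q` we have `Γᵢ = q·Γᵢ₋₁ ∪ [q bᵢ, ∞)` and `[bᵢ, ∞) ⊆ Γᵢ₋₁`. So `q t ∈ Γᵢ ↔ t ∈ Γᵢ₋₁`,
and every element of `Γᵢ` prime to `q` is at least `q bᵢ`. This gives the recursion
`#Ap(Γᵢ, q x) = #Ap(Γᵢ₋₁, x) + (q - 1) x`, while for `q ∤ x` the Apéry set `Ap(Γᵢ, x)` contains `0`
and `q·(Γᵢ₋₁ ∩ (0, bᵢ])`, which has `λ₁ + ⋯ + λᵢ` elements; for `x = 1` there is nothing else.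
Peeling the factors `q` off `x` bounds `#Ap(Γₙ, x)` below by some `q^k + λ₁ + ⋯ + λ_{n-k}` with
`q^k ≤ x`, and `x = q^k` attains that value.
-/

open Set

section Apery

variable {Γ : Set ℕ} {N : ℕ}

theorem ap_subset_Iio (hΓ : Ici N ⊆ Γ) (x : ℕ) : Ap Γ x ⊆ Iio (N + x) := by
  rintro s ⟨-, hs⟩
  rw [mem_Iio]
  by_contra! hle
  exact hs (s - x) (hΓ (mem_Ici.2 (by omega))) (by omega)

theorem ap_finite (hΓ : Ici N ⊆ Γ) (x : ℕ) : (Ap Γ x).Finite :=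
  (finite_Iio _).subset (ap_subset_Iio hΓ x)

theorem ap_univ (x : ℕ) : Ap univ x = Iio x := by
  ext s
  simp only [Ap, mem_univ, true_and, forall_const, mem_ofPred_eq, mem_Iio]
  refine ⟨fun h => ?_, fun h t => by omega⟩
  by_contra! hle
  exact h (s - x) (by omega)

theorem ncard_ap_one_le (hΓ : Ici N ⊆ Γ) : (Ap Γ 1).ncard ≤ (Ioc 0 N ∩ Γ).ncard + 1 := by
  have hsub : Ap Γ 1 ⊆ insert 0 (Ioc 0 N ∩ Γ) := by
    intro s hs
    have hlt : s < N + 1 := ap_subset_Iio hΓ 1 hs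
    rcases Nat.eq_zero_or_pos s with rfl | hpos
    · exact mem_insert 0 _
    · exact mem_insert_of_mem _ ⟨⟨hpos, by omega⟩, hs.1⟩
  exact (ncard_le_ncard hsub (((finite_Ioc 0 N).inter_of_left Γ).insert 0)).trans
    (ncard_insert_le _ _)

end Apery

def indStep (q c : ℕ) (Γ : Set ℕ) : Set ℕ := (q * ·) '' Γ ∪ Ici (q * c)

section indStep

variable {q c : ℕ} {Γ : Set ℕ}

theorem Ici_subset_indStep : Ici (q * c) ⊆ indStep q c Γ := subset_union_right

theorem mul_mem_indStep_iff (hq : 0 < q) (hΓ : Ici c ⊆ Γ) {t : ℕ} :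
    q * t ∈ indStep q c Γ ↔ t ∈ Γ := by
  refine ⟨?_, fun ht => Or.inl ⟨t, ht, rfl⟩⟩
  rintro (⟨t', ht', heq⟩ | hle)
  · rwa [← Nat.eq_of_mul_eq_mul_left hq heq]
  · exact hΓ (Nat.le_of_mul_le_mul_left hle hq)

theorem le_of_mem_indStep_of_not_dvd {s : ℕ} (hs : s ∈ indStep q c Γ) (hdvd : ¬ q ∣ s) :
    q * c ≤ s := by
  rcases hs with ⟨t, -, rfl⟩ | hle
  · exact absurd (dvd_mul_right q t) hdvd
  · exact hle

theorem mul_mem_ap_indStep_iff (hq : 0 < q) (hΓ : Ici c ⊆ Γ) {t x : ℕ} :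
    q * t ∈ Ap (indStep q c Γ) (q * x) ↔ t ∈ Ap Γ x := by
  simp only [Ap, mem_ofPred_eq, mul_mem_indStep_iff hq hΓ]
  refine and_congr_right fun _ => ⟨fun h r hr heq => ?_, fun h r hr heq => ?_⟩
  · exact h (q * r) ((mul_mem_indStep_iff hq hΓ).2 hr) (by rw [heq, mul_add])
  · have hxt : x ≤ t := Nat.le_of_mul_le_mul_left (by omega : q * x ≤ q * t) hq
    have hr' : r = q * (t - x) := by rw [Nat.mul_sub]; omega
    rw [hr', mul_mem_indStep_iff hq hΓ] at hr
    exact h _ hr (by omega)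

theorem mem_ap_indStep_iff_of_not_dvd {s x : ℕ} (hdvd : ¬ q ∣ s) :
    s ∈ Ap (indStep q c Γ) (q * x) ↔ s ∈ Ico (q * c) (q * c + q * x) := by
  constructor
  · rintro ⟨hs, hap⟩
    refine ⟨le_of_mem_indStep_of_not_dvd hs hdvd, ?_⟩
    by_contra! hlt
    exact hap (s - q * x) (Ici_subset_indStep (mem_Ici.2 (by omega))) (by omega)
  · rintro ⟨hle, hlt⟩
    refine ⟨Ici_subset_indStep hle, fun r hr heq => ?_⟩
    have hr : q * c ≤ r := le_of_mem_indStep_of_not_dvd hr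
      fun h => hdvd (heq ▸ dvd_add h (dvd_mul_right q x))
    omega

theorem ap_indStep_mul (hq : 0 < q) (hΓ : Ici c ⊆ Γ) (x : ℕ) :
    Ap (indStep q c Γ) (q * x) =
      (q * ·) '' Ap Γ x ∪ {s ∈ Ico (q * c) (q * c + q * x) | ¬ q ∣ s} := by
  ext s
  by_cases hdvd : q ∣ s
  · obtain ⟨t, rfl⟩ := hdvd
    simp [mul_mem_ap_indStep_iff hq hΓ, (mul_right_injective₀ hq.ne').mem_set_image]
  · simp only [mem_ap_indStep_iff_of_not_dvd hdvd, mem_union, mem_ofPred_eq, hdvd,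
      not_false_eq_true, and_true, iff_or_self]
    rintro ⟨t, -, rfl⟩
    exact absurd (dvd_mul_right q t) hdvd

theorem ncard_Ico_mul_not_dvd (hq : 0 < q) (c x : ℕ) :
    {s ∈ Ico (q * c) (q * c + q * x) | ¬ q ∣ s}.ncard = (q - 1) * x := by
  have hmul : (q * ·) '' Ico c (c + x) = Ico (q * c) (q * c + q * x) ∩ {s | q ∣ s} := by
    ext s
    simp only [mem_image, mem_inter_iff, mem_Ico, mem_ofPred_eq, ← mul_add]
    constructor
    · rintro ⟨t, ⟨hct, htx⟩, rfl⟩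
      exact ⟨⟨Nat.mul_le_mul_left q hct, Nat.mul_lt_mul_of_pos_left htx hq⟩, dvd_mul_right q t⟩
    · rintro ⟨⟨hcs, hsx⟩, t, rfl⟩
      exact ⟨t, ⟨Nat.le_of_mul_le_mul_left hcs hq, Nat.lt_of_mul_lt_mul_left hsx⟩, rfl⟩
  have hsplit := ncard_inter_add_ncard_sdiff_eq_ncard (Ico (q * c) (q * c + q * x)) {s | q ∣ s}
  rw [← hmul, ncard_image_of_injective _ (mul_right_injective₀ hq.ne'), ncard_Ico_nat,
    ncard_Ico_nat] at hsplit
  change (Ico (q * c) (q * c + q * x) \ {s | q ∣ s}).ncard = _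
  rw [Nat.sub_one_mul]
  omega

theorem ncard_ap_indStep_mul (hq : 0 < q) (hΓ : Ici c ⊆ Γ) (x : ℕ) :
    (Ap (indStep q c Γ) (q * x)).ncard = (Ap Γ x).ncard + (q - 1) * x := by
  have hdisj : Disjoint ((q * ·) '' Ap Γ x) {s ∈ Ico (q * c) (q * c + q * x) | ¬ q ∣ s} := by
    rw [disjoint_left]
    rintro _ ⟨t, -, rfl⟩ ⟨-, hdvd⟩
    exact hdvd (dvd_mul_right q t)
  rw [ap_indStep_mul hq hΓ, ncard_union_eq hdisj ((ap_finite hΓ x).image _)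
      ((finite_Ico _ _).subset (sep_subset _ _)),
    ncard_image_of_injective _ (mul_right_injective₀ hq.ne'), ncard_Ico_mul_not_dvd hq]

theorem ncard_Ioc_inter_indStep (hq : 0 < q) (hΓ : Ici c ⊆ Γ) :
    (Ioc 0 (q * c) ∩ indStep q c Γ).ncard = (Ioc 0 c ∩ Γ).ncard := by
  have himage : Ioc 0 (q * c) ∩ indStep q c Γ = (q * ·) '' (Ioc 0 c ∩ Γ) := by
    ext s
    constructor
    · rintro ⟨⟨hs0, hsc⟩, hs⟩
      obtain ⟨t, rfl⟩ : q ∣ s := by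
        by_contra hdvd
        exact hdvd ⟨c, by have := le_of_mem_indStep_of_not_dvd hs hdvd; omega⟩
      refine ⟨t, ⟨⟨Nat.pos_of_mul_pos_left hs0, Nat.le_of_mul_le_mul_left hsc hq⟩,
        (mul_mem_indStep_iff hq hΓ).1 hs⟩, rfl⟩
    · rintro ⟨t, ⟨⟨ht0, htc⟩, ht⟩, rfl⟩
      exact ⟨⟨Nat.mul_pos hq ht0, Nat.mul_le_mul_left q htc⟩, (mul_mem_indStep_iff hq hΓ).2 ht⟩
  rw [himage, ncard_image_of_injective _ (mul_right_injective₀ hq.ne')]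

-- For `t ∈ Γ ∩ (0, c]`, `q * t - u` is prime to `q` and below `q * c`: a gap of `indStep q c Γ`.
theorem ncard_Ioc_inter_add_one_le_ncard_ap_indStep (hq : 0 < q) (hΓ : Ici c ⊆ Γ) (h0 : 0 ∈ Γ)
    {u : ℕ} (hu : ¬ q ∣ u) : (Ioc 0 c ∩ Γ).ncard + 1 ≤ (Ap (indStep q c Γ) u).ncard := by
  have hsub : insert 0 ((q * ·) '' (Ioc 0 c ∩ Γ)) ⊆ Ap (indStep q c Γ) u := by
    refine insert_subset ⟨Or.inl ⟨0, h0, rfl⟩, fun r _ h => hu ?_⟩ ?_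
    · rw [show u = 0 by omega]
      exact dvd_zero q
    rintro _ ⟨t, ⟨⟨-, htc⟩, ht⟩, rfl⟩
    refine ⟨(mul_mem_indStep_iff hq hΓ).2 ht, fun r hr heq => ?_⟩
    change q * t = r + u at heq
    have hr : q * c ≤ r := le_of_mem_indStep_of_not_dvd hr
      fun h => hu ((Nat.dvd_add_right h).1 (heq ▸ dvd_mul_right q t))
    have : q * t ≤ q * c := Nat.mul_le_mul_left q htc
    have : 0 < u := Nat.pos_of_ne_zero fun h => hu (h ▸ dvd_zero q)
    omega
  have h0_notMem : 0 ∉ (q * ·) '' (Ioc 0 c ∩ Γ) := by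
    rintro ⟨t, ⟨⟨ht0, -⟩, -⟩, ht⟩
    exact (Nat.mul_pos hq ht0).ne' ht
  calc (Ioc 0 c ∩ Γ).ncard + 1 = (insert 0 ((q * ·) '' (Ioc 0 c ∩ Γ))).ncard := by
        rw [ncard_insert_of_notMem h0_notMem (((finite_Ioc _ _).inter_of_left _).image _),
          ncard_image_of_injective _ (mul_right_injective₀ hq.ne')]
    _ ≤ (Ap (indStep q c Γ) u).ncard := ncard_le_ncard hsub (ap_finite Ici_subset_indStep u)

end indStep

theorem zero_mem_indSG (a b : ℕ → ℕ) : ∀ m, 0 ∈ IndSG a b m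
  | 0 => mem_univ 0
  | m + 1 => Or.inl ⟨0, zero_mem_indSG a b m, mul_zero _⟩

structure IsConstInductive (n q : ℕ) (a b lam : ℕ → ℕ) : Prop where
  q_pos : 0 < q
  a_eq : ∀ i, 1 ≤ i → i ≤ n → a i = q
  mul_le_b_succ : ∀ i, 1 ≤ i → i + 1 ≤ n → q * b i ≤ b (i + 1)
  lam_one : lam 1 = b 1
  lam_succ : ∀ i, 1 ≤ i → i + 1 ≤ n → lam (i + 1) = b (i + 1) - q * b i

namespace IsConstInductive

variable {n q : ℕ} {a b lam : ℕ → ℕ}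

theorem indSG_succ {i : ℕ} (h : IsConstInductive n q a b lam) (hi : i + 1 ≤ n) :
    IndSG a b (i + 1) = indStep q (b (i + 1)) (IndSG a b i) := by
  rw [IndSG, h.a_eq _ (by omega) hi]
  rfl

theorem Ici_subset_indSG (h : IsConstInductive n q a b lam) :
    ∀ {m}, m + 1 ≤ n → Ici (b (m + 1)) ⊆ IndSG a b m
  | 0, _ => subset_univ _
  | m + 1, hm => by
    rw [h.indSG_succ (by omega)]
    exact (Ici_subset_Ici.2 (h.mul_le_b_succ _ (by omega) hm)).trans Ici_subset_indStep

theorem Ici_mul_subset_indSG (h : IsConstInductive n q a b lam) {m : ℕ} (hm : m + 1 ≤ n) :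
    Ici (q * b (m + 1)) ⊆ IndSG a b (m + 1) :=
  h.indSG_succ hm ▸ Ici_subset_indStep

theorem ncard_Ioc_inter_indSG (h : IsConstInductive n q a b lam) : ∀ {m}, m + 1 ≤ n →
    (Ioc 0 (b (m + 1)) ∩ IndSG a b m).ncard = ∑ i ∈ Finset.Icc 1 (m + 1), lam i
  | 0, _ => by simp [IndSG, h.lam_one]
  | m + 1, hm => by
    have hle := h.mul_le_b_succ (m + 1) (by omega) hm
    have hsplit : Ioc 0 (b (m + 2)) ∩ IndSG a b (m + 1) =
        (Ioc 0 (q * b (m + 1)) ∩ IndSG a b (m + 1)) ∪ Ioc (q * b (m + 1)) (b (m + 2)) := by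
      rw [← Ioc_union_Ioc_eq_Ioc (Nat.zero_le _) hle, union_inter_distrib_right,
        (inter_eq_left (s := Ioc (q * b (m + 1)) (b (m + 2)))).2
          fun s hs => h.Ici_mul_subset_indSG (by omega) (mem_Ici.2 hs.1.le)]
    have hdisj : Disjoint (Ioc 0 (q * b (m + 1)) ∩ IndSG a b (m + 1))
        (Ioc (q * b (m + 1)) (b (m + 2))) :=
      (Ioc_disjoint_Ioc_of_le le_rfl).mono_left inter_subset_left
    rw [hsplit, ncard_union_eq hdisj, Finset.sum_Icc_succ_top (by omega),
      h.lam_succ (m + 1) (by omega) hm, h.indSG_succ (by omega),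
      ncard_Ioc_inter_indStep h.q_pos (h.Ici_subset_indSG (by omega)),
      h.ncard_Ioc_inter_indSG (by omega), ncard_Ioc_nat]

theorem ncard_ap_pow_le (h : IsConstInductive n q a b lam) : ∀ {k m}, k ≤ m → m ≤ n →
    (Ap (IndSG a b m) (q ^ k)).ncard ≤ q ^ k + ∑ i ∈ Finset.Icc 1 (m - k), lam i
  | 0, 0, _, _ => by simp [IndSG, ap_univ]
  | 0, m + 1, _, hm => by
    rw [pow_zero, Nat.sub_zero, ← h.ncard_Ioc_inter_indSG hm,
      ← ncard_Ioc_inter_indStep h.q_pos (h.Ici_subset_indSG hm), ← h.indSG_succ hm]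
    exact (ncard_ap_one_le (h.Ici_mul_subset_indSG hm)).trans_eq (Nat.add_comm _ _)
  | k + 1, m + 1, hk, hm => by
    have ih := h.ncard_ap_pow_le (k := k) (m := m) (by omega) (by omega)
    rw [pow_succ', h.indSG_succ hm, ncard_ap_indStep_mul h.q_pos (h.Ici_subset_indSG hm),
      Nat.add_sub_add_right, Nat.sub_one_mul]
    have : q ^ k ≤ q * q ^ k := Nat.le_mul_of_pos_left _ h.q_pos
    omega

theorem exists_pow_le_ncard_ap (h : IsConstInductive n q a b lam) :
    ∀ {m}, m ≤ n → ∀ {x}, 1 ≤ x → x ≤ q ^ m → ∃ k ≤ m,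
      q ^ k ≤ x ∧ q ^ k + ∑ i ∈ Finset.Icc 1 (m - k), lam i ≤ (Ap (IndSG a b m) x).ncard
  | 0, _, x, hx1, hx => ⟨0, le_rfl, by simpa using hx1, by simp [IndSG, ap_univ]; omega⟩
  | m + 1, hm, x, hx1, hx => by
    rw [h.indSG_succ hm]
    by_cases hdvd : q ∣ x
    · obtain ⟨y, rfl⟩ := hdvd
      have hy1 : 1 ≤ y := Nat.pos_of_mul_pos_left hx1
      have hy : y ≤ q ^ m := Nat.le_of_mul_le_mul_left (pow_succ' q m ▸ hx) h.q_pos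
      obtain ⟨k, hk, hky, hle⟩ := h.exists_pow_le_ncard_ap (by omega) hy1 hy
      refine ⟨k + 1, by omega, pow_succ' q k ▸ Nat.mul_le_mul_left q hky, ?_⟩
      rw [ncard_ap_indStep_mul h.q_pos (h.Ici_subset_indSG hm), pow_succ', Nat.add_sub_add_right]
      have := Nat.mul_le_mul_left (q - 1) hky
      have : q * q ^ k = (q - 1) * q ^ k + q ^ k := by
        rw [Nat.sub_one_mul, Nat.sub_add_cancel (Nat.le_mul_of_pos_left _ h.q_pos)]
      omega
    · refine ⟨0, by omega, by simpa using hx1, ?_⟩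
      rw [pow_zero, Nat.sub_zero, ← h.ncard_Ioc_inter_indSG hm, add_comm]
      exact ncard_Ioc_inter_add_one_le_ncard_ap_indStep h.q_pos (h.Ici_subset_indSG hm)
        (zero_mem_indSG a b m) hdvd

end IsConstInductive

theorem stmt12_general (n : ℕ) (a b : ℕ → ℕ)
    (hb : ∀ i, 1 ≤ i → i + 1 ≤ n → a i * b i ≤ b (i + 1))
    (q : ℕ) (hq : 2 ≤ q) (haconst : ∀ i, 1 ≤ i → i ≤ n → a i = q)
    (lam : ℕ → ℕ)
    (hlam1 : lam 1 = b 1)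
    (hlam : ∀ i, 2 ≤ i → i ≤ n → lam i = b i - a (i - 1) * b (i - 1)) :
    sInf {m | ∃ x, 1 ≤ x ∧ x ≤ q ^ n ∧ m = (Ap (IndSG a b n) x).ncard}
      = sInf {m | ∃ k, k ≤ n ∧ m = q ^ k + ∑ i ∈ Finset.Icc 1 (n - k), lam i} := by
  have h : IsConstInductive n q a b lam :=
    { q_pos := by omega
      a_eq := haconst
      mul_le_b_succ := fun i hi hin => haconst i hi (by omega) ▸ hb i hi hin
      lam_one := hlam1
      lam_succ := fun i hi hin => by
        simpa [haconst i hi (by omega)] using hlam (i + 1) (by omega) hin }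
  apply csInf_eq_csInf_of_forall_exists_le
  · rintro _ ⟨x, hx1, hxn, rfl⟩
    obtain ⟨k, hk, -, hle⟩ := h.exists_pow_le_ncard_ap le_rfl hx1 hxn
    exact ⟨_, ⟨k, hk, rfl⟩, hle⟩
  · rintro _ ⟨k, hk, rfl⟩
    exact ⟨_, ⟨q ^ k, Nat.one_le_pow _ _ h.q_pos, Nat.pow_le_pow_right h.q_pos hk, rfl⟩,
      h.ncard_ap_pow_le hk le_rfl⟩

/-- In the constant case `aᵢ = q` for all `i`, the second Feng–Rao number
`E(Γₙ,2) = min_{1 ≤ x ≤ qⁿ} #Ap(Γₙ,x)` equals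
`min_{0 ≤ k ≤ n} (q^k + λ₁ + ⋯ + λ_{n-k})`. -/
theorem stmt12 (n : ℕ) (hn : 1 ≤ n) (a b : ℕ → ℕ)
    (ha : ∀ i, 1 ≤ i → i ≤ n → 2 ≤ a i)
    (hb1 : 1 ≤ b 1)
    (hb : ∀ i, 1 ≤ i → i + 1 ≤ n → a i * b i ≤ b (i + 1))
    (q : ℕ) (hq : 2 ≤ q) (haconst : ∀ i, 1 ≤ i → i ≤ n → a i = q)
    (lam : ℕ → ℕ)
    (hlam1 : lam 1 = b 1)
    (hlam : ∀ i, 2 ≤ i → i ≤ n → lam i = b i - a (i - 1) * b (i - 1)) :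
    sInf {m | ∃ x, 1 ≤ x ∧ x ≤ q ^ n ∧ m = (Ap (IndSG a b n) x).ncard}
      = sInf {m | ∃ k, k ≤ n ∧ m = q ^ k + ∑ i ∈ Finset.Icc 1 (n - k), lam i} :=
  stmt12_general n a b hb q hq haconst lam hlam1 hlam
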